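/- arXiv:1406.2281 — 2 statements merged into one kernel-verified Lean document; each statement's English description precedes it below -/
import Mathlib

section
/- Let H be a real Hilbert space with inner product a, and for a finite index set Z let (H_z)_{z∈Z} be closed subspaces. Suppose e ∈ H and ζ_z ∈ H_z satisfy a(ζ_z, ψ) = a(e, ψ) for all ψ ∈ H_z. Suppose further that every w ∈ H admits a decomposition w = ∑_{z∈Z} ψ_z with ψ_z ∈ H_z and ∑_z ‖ψ_z‖² ≤ C² ‖w‖². Then ‖e‖ ≤ C (∑_{z∈Z} ‖ζ_z‖²)^{1/2}. -/
/-!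
Decompose the error itself, `e = ∑ z, ψ z` with `ψ z ∈ Hz z`. Galerkin orthogonality of the
local Ritz projections gives `‖e‖² = ∑ z, ⟪ζ z, ψ z⟫`, and Cauchy–Schwarz together with the
stability of the decomposition bounds this by `(∑ z, ‖ζ z‖²)^{1/2} · C ‖e‖`.
-/

open Finset

section LocalRitz

variable {H : Type*} [NormedAddCommGroup H] [InnerProductSpace ℝ H] {ι : Type*} [Fintype ι]

theorem norm_sq_eq_sum_inner_of_local_ritz (Hz : ι → Submodule ℝ H) {e : H} {ζ ψ : ι → H}
    (hζ : ∀ z, ∀ φ ∈ Hz z, (inner ℝ (ζ z) φ : ℝ) = inner ℝ e φ)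
    (hψ : ∀ z, ψ z ∈ Hz z) (he : e = ∑ z, ψ z) :
    ‖e‖ ^ 2 = ∑ z, (inner ℝ (ζ z) (ψ z) : ℝ) :=
  calc ‖e‖ ^ 2 = inner ℝ e (∑ z, ψ z) := by rw [← he, real_inner_self_eq_norm_sq]
    _ = ∑ z, (inner ℝ e (ψ z) : ℝ) := inner_sum _ _ _
    _ = ∑ z, (inner ℝ (ζ z) (ψ z) : ℝ) := sum_congr rfl fun z _ => (hζ z _ (hψ z)).symm

theorem norm_sq_le_sqrt_mul_sqrt_of_local_ritz (Hz : ι → Submodule ℝ H) {e : H} {ζ ψ : ι → H}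
    (hζ : ∀ z, ∀ φ ∈ Hz z, (inner ℝ (ζ z) φ : ℝ) = inner ℝ e φ)
    (hψ : ∀ z, ψ z ∈ Hz z) (he : e = ∑ z, ψ z) :
    ‖e‖ ^ 2 ≤ √(∑ z, ‖ζ z‖ ^ 2) * √(∑ z, ‖ψ z‖ ^ 2) :=
  calc ‖e‖ ^ 2 = ∑ z, (inner ℝ (ζ z) (ψ z) : ℝ) :=
        norm_sq_eq_sum_inner_of_local_ritz Hz hζ hψ he
    _ ≤ ∑ z, ‖ζ z‖ * ‖ψ z‖ := sum_le_sum fun _ _ => real_inner_le_norm _ _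
    _ ≤ √(∑ z, ‖ζ z‖ ^ 2) * √(∑ z, ‖ψ z‖ ^ 2) := Real.sum_mul_le_sqrt_mul_sqrt _ _ _

end LocalRitz

theorem le_of_sq_le_mul_self {x a : ℝ} (ha : 0 ≤ a) (h : x ^ 2 ≤ a * x) : x ≤ a := by
  nlinarith

theorem abstract_upper_bound_general
    {H : Type*} [NormedAddCommGroup H] [InnerProductSpace ℝ H]
    {ι : Type*} [Fintype ι]
    (Hz : ι → Submodule ℝ H) (C : ℝ) (hC : 0 ≤ C)
    (e : H) (ζ : ι → H)
    (hζ : ∀ z, ∀ ψ ∈ Hz z, (inner ℝ (ζ z) ψ : ℝ) = inner ℝ e ψ)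
    (hdecomp : ∀ w : H, ∃ ψ : ι → H, (∀ z, ψ z ∈ Hz z) ∧ w = ∑ z, ψ z ∧
      (∑ z, ‖ψ z‖ ^ 2) ≤ C ^ 2 * ‖w‖ ^ 2) :
    ‖e‖ ≤ C * Real.sqrt (∑ z, ‖ζ z‖ ^ 2) := by
  obtain ⟨ψ, hψ, he, hstable⟩ := hdecomp e
  have hψ_norm : √(∑ z, ‖ψ z‖ ^ 2) ≤ C * ‖e‖ :=
    (Real.sqrt_le_left (by positivity)).2 (by rwa [mul_pow])
  refine le_of_sq_le_mul_self (by positivity) ?_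
  calc ‖e‖ ^ 2 ≤ √(∑ z, ‖ζ z‖ ^ 2) * √(∑ z, ‖ψ z‖ ^ 2) :=
        norm_sq_le_sqrt_mul_sqrt_of_local_ritz Hz hζ hψ he
    _ ≤ √(∑ z, ‖ζ z‖ ^ 2) * (C * ‖e‖) := by gcongr
    _ = C * √(∑ z, ‖ζ z‖ ^ 2) * ‖e‖ := by ring

/-- Abstract reliability bound: if `ζ z` is the local Ritz projection of the error `e`
onto the subspace `Hz z`, and `H` admits stable decompositions into the subspaces
`Hz z` with constant `C`, then `‖e‖ ≤ C (∑_z ‖ζ z‖²)^{1/2}`. -/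
theorem abstract_upper_bound
    {H : Type*} [NormedAddCommGroup H] [InnerProductSpace ℝ H] [CompleteSpace H]
    {ι : Type*} [Fintype ι]
    (Hz : ι → Submodule ℝ H) (C : ℝ) (hC : 0 ≤ C)
    (e : H) (ζ : ι → H) (hζmem : ∀ z, ζ z ∈ Hz z)
    (hζ : ∀ z, ∀ ψ ∈ Hz z, (inner ℝ (ζ z) ψ : ℝ) = inner ℝ e ψ)
    (hdecomp : ∀ w : H, ∃ ψ : ι → H, (∀ z, ψ z ∈ Hz z) ∧ w = ∑ z, ψ z ∧
      (∑ z, ‖ψ z‖ ^ 2) ≤ C ^ 2 * ‖w‖ ^ 2) :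
    ‖e‖ ≤ C * Real.sqrt (∑ z, ‖ζ z‖ ^ 2) :=
  abstract_upper_bound_general Hz C hC e ζ hζ hdecomp
end

section
/- Let α ∈ (-1,1), Y > 0, Ω ⊂ ℝ^n open bounded. Suppose w ∈ H¹(y^α, Ω × (0,Y)) is smooth and vanishes for y = Y. Then the weighted Poincaré inequality ‖w‖_{L²(y^α, Ω×(0,Y))} ≤ (1−α²)^{-1/2} Y ‖∂_y w‖_{L²(y^α, Ω×(0,Y))} holds, and consequently the seminorm ‖∇w‖_{L²(y^α)} is a norm on the subspace of functions vanishing at y = Y, equivalent to the full H¹(y^α) norm with equivalence constant depending only on α and Y. -/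
set_option maxHeartbeats 1000000

open MeasureTheory Set

lemma rpow_integrableOn {α Y : ℝ} (hα : -1 < α) (hY : 0 < Y) :
    IntegrableOn (fun y : ℝ => y ^ α) (Ioo 0 Y) := by
  have h := intervalIntegral.intervalIntegrable_rpow' (a := 0) (b := Y) hα
  rw [intervalIntegrable_iff, uIoc_of_le hY.le] at h
  exact (integrableOn_Ioc_iff_integrableOn_Ioo).mp h

lemma weighted_integrableOn {α Y : ℝ} (hα : -1 < α) (hY : 0 < Y)
    {h : ℝ → ℝ} (hh : Continuous h) :
    IntegrableOn (fun y : ℝ => y ^ α * h y) (Ioo 0 Y) := by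
  obtain ⟨M, hM⟩ := (isCompact_Icc (a := (0:ℝ)) (b := Y)).exists_bound_of_continuousOn
    hh.continuousOn
  refine Integrable.mono' ((rpow_integrableOn hα hY).const_mul M)
    (((by fun_prop : Measurable fun y : ℝ => y ^ α)).mul hh.measurable).aestronglyMeasurable ?_
  filter_upwards [ae_restrict_mem measurableSet_Ioo] with y hy
  have hy0 : 0 < y := hy.1
  have h1 : |h y| ≤ M := by
    simpa [Real.norm_eq_abs] using hM y ⟨hy0.le, hy.2.le⟩
  have h2 : (0:ℝ) ≤ y ^ α := Real.rpow_nonneg hy0.le α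
  rw [Real.norm_eq_abs, abs_mul, abs_of_nonneg h2]
  calc y ^ α * |h y| ≤ y ^ α * M := by nlinarith
    _ = M * y ^ α := mul_comm _ _

lemma oneD {α Y : ℝ} (hα1 : -1 < α) (hα2 : α < 1) (hY : 0 < Y)
    {g : ℝ → ℝ} (hg : ContDiff ℝ (⊤ : ℕ∞) g) (hgY : g Y = 0) :
    ∫ y in Ioo 0 Y, y ^ α * (g y) ^ 2 ≤
      (1 - α ^ 2)⁻¹ * Y ^ 2 * ∫ y in Ioo 0 Y, y ^ α * (deriv g y) ^ 2 := by
  have h1α : (0:ℝ) < 1 - α := by linarith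
  have h1α' : (0:ℝ) < 1 + α := by linarith
  have hgc : Continuous g := hg.continuous
  have hg' : Continuous (deriv g) := hg.continuous_deriv (by simp)
  set D := ∫ y in Ioo 0 Y, y ^ α * (deriv g y) ^ 2 with hDdef
  have hDint : IntegrableOn (fun y : ℝ => y ^ α * (deriv g y) ^ 2) (Ioo 0 Y) :=
    weighted_integrableOn hα1 hY (by continuity)
  have hDnn : 0 ≤ D := setIntegral_nonneg measurableSet_Ioo
    (fun y hy => mul_nonneg (Real.rpow_nonneg hy.1.le _) (sq_nonneg _))
  -- pointwise bound
  have key : ∀ y ∈ Ioo (0:ℝ) Y, (g y) ^ 2 ≤ Y ^ (1 - α) / (1 - α) * D := by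
    intro y hy
    have hy0 : 0 < y := hy.1
    have hyY : y < Y := hy.2
    set μ := volume.restrict (Ioo y Y) with hμ
    have hfin : IsFiniteMeasure μ := by
      constructor
      rw [hμ, Measure.restrict_apply_univ, Real.volume_Ioo]
      exact ENNReal.ofReal_lt_top
    -- FTC bound
    have hftc : ∫ t in y..Y, deriv g t = g Y - g y :=
      intervalIntegral.integral_deriv_eq_sub (fun t _ => hg.differentiable (by simp) t)
        ((hg'.intervalIntegrable y Y))
    have habs : |g y| ≤ ∫ t, |deriv g t| ∂μ := by
      have hgy : g y = -∫ t in y..Y, deriv g t := by rw [hftc, hgY]; ring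
      rw [hgy, abs_neg]
      calc |∫ t in y..Y, deriv g t| ≤ ∫ t in y..Y, |deriv g t| := by
            simpa [Real.norm_eq_abs] using
              intervalIntegral.norm_integral_le_integral_norm (f := deriv g) (μ := volume)
                (a := y) (b := Y) hyY.le
        _ = ∫ t, |deriv g t| ∂μ := by
            rw [intervalIntegral.integral_of_le hyY.le, integral_Ioc_eq_integral_Ioo]
    -- Cauchy–Schwarz
    set u := fun t : ℝ => t ^ (-α / 2) with hu
    set v := fun t : ℝ => t ^ (α / 2) * |deriv g t| with hv
    obtain ⟨M₁, hM₁⟩ := (isCompact_Icc (a := y) (b := Y)).exists_bound_of_continuousOn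
      (ContinuousOn.rpow_const continuousOn_id
        (fun t ht => Or.inl (ne_of_gt (lt_of_lt_of_le hy0 ht.1))))
    obtain ⟨M₂, hM₂⟩ := (isCompact_Icc (a := y) (b := Y)).exists_bound_of_continuousOn
      ((ContinuousOn.rpow_const continuousOn_id
        (fun t ht => Or.inl (ne_of_gt (lt_of_lt_of_le hy0 ht.1)))).mul
        (hg'.abs.continuousOn))
    have hum : MemLp u (ENNReal.ofReal 2) μ := by
      refine MemLp.of_bound ((by fun_prop : Measurable u)).aestronglyMeasurable M₁ ?_
      filter_upwards [ae_restrict_mem measurableSet_Ioo] with t ht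
      exact hM₁ t ⟨ht.1.le, ht.2.le⟩
    have hvm : MemLp v (ENNReal.ofReal 2) μ := by
      refine MemLp.of_bound ((by fun_prop : Measurable v)).aestronglyMeasurable M₂ ?_
      filter_upwards [ae_restrict_mem measurableSet_Ioo] with t ht
      exact hM₂ t ⟨ht.1.le, ht.2.le⟩
    have hconj : Real.HolderConjugate 2 2 := Real.HolderConjugate.two_two
    have hunn : 0 ≤ᵐ[μ] u := by
      filter_upwards [ae_restrict_mem measurableSet_Ioo] with t ht
      exact Real.rpow_nonneg (hy0.trans ht.1).le _
    have hvnn : 0 ≤ᵐ[μ] v := by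
      filter_upwards [ae_restrict_mem measurableSet_Ioo] with t ht
      exact mul_nonneg (Real.rpow_nonneg (hy0.trans ht.1).le _) (abs_nonneg _)
    have hH := integral_mul_le_Lp_mul_Lq_of_nonneg hconj hunn hvnn hum hvm
    -- identify the three integrals
    have huv : ∫ t, u t * v t ∂μ = ∫ t, |deriv g t| ∂μ := by
      refine integral_congr_ae ?_
      filter_upwards [ae_restrict_mem measurableSet_Ioo] with t ht
      have ht0 : 0 < t := hy0.trans ht.1
      show t ^ (-α / 2) * (t ^ (α / 2) * |deriv g t|) = |deriv g t|
      rw [← mul_assoc, ← Real.rpow_add ht0]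
      have he : -α / 2 + α / 2 = 0 := by ring
      rw [he, Real.rpow_zero, one_mul]
    have hu2 : ∫ t, u t ^ (2:ℝ) ∂μ = ∫ t, t ^ (-α) ∂μ := by
      refine integral_congr_ae ?_
      filter_upwards [ae_restrict_mem measurableSet_Ioo] with t ht
      have ht0 : 0 < t := hy0.trans ht.1
      show (t ^ (-α / 2) : ℝ) ^ (2:ℝ) = t ^ (-α)
      rw [← Real.rpow_mul ht0.le]
      norm_num
    have hv2 : ∫ t, v t ^ (2:ℝ) ∂μ = ∫ t, t ^ α * (deriv g t) ^ 2 ∂μ := by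
      refine integral_congr_ae ?_
      filter_upwards [ae_restrict_mem measurableSet_Ioo] with t ht
      have ht0 : 0 < t := hy0.trans ht.1
      show (t ^ (α / 2) * |deriv g t| : ℝ) ^ (2:ℝ) = t ^ α * (deriv g t) ^ 2
      have habs2 : |deriv g t| ^ (2:ℝ) = (deriv g t) ^ 2 := by
        rw [show ((2:ℝ)) = ((2:ℕ):ℝ) by norm_num, Real.rpow_natCast, sq_abs]
      have hrp : (t ^ (α / 2) : ℝ) ^ (2:ℝ) = t ^ α := by
        rw [← Real.rpow_mul ht0.le]; norm_num
      rw [Real.mul_rpow (Real.rpow_nonneg ht0.le _) (abs_nonneg _), habs2, hrp]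
    -- the two integrals on the right
    have hA : ∫ t, t ^ (-α) ∂μ ≤ Y ^ (1 - α) / (1 - α) := by
      have hint := integral_rpow (a := y) (b := Y) (r := -α) (Or.inl (by linarith))
      rw [intervalIntegral.integral_of_le hyY.le, integral_Ioc_eq_integral_Ioo] at hint
      rw [hμ] at *
      rw [hint]
      have hynn : (0:ℝ) ≤ y ^ (-α + 1) := Real.rpow_nonneg hy0.le _
      have he : -α + 1 = 1 - α := by ring
      rw [he] at hynn ⊢
      have hle : Y ^ (1 - α) - y ^ (1 - α) ≤ Y ^ (1 - α) := by linarith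
      exact (div_le_div_iff_of_pos_right h1α).mpr hle
    have hAnn : 0 ≤ ∫ t, t ^ (-α) ∂μ := by
      refine setIntegral_nonneg measurableSet_Ioo fun t ht => ?_
      exact Real.rpow_nonneg (hy0.trans ht.1).le _
    have hB : ∫ t, t ^ α * (deriv g t) ^ 2 ∂μ ≤ D := by
      refine setIntegral_mono_set hDint ?_ ((Ioo_subset_Ioo hy0.le le_rfl).eventuallyLE)
      filter_upwards [ae_restrict_mem measurableSet_Ioo] with t ht
      exact mul_nonneg (Real.rpow_nonneg ht.1.le _) (sq_nonneg _)
    have hBnn : 0 ≤ ∫ t, t ^ α * (deriv g t) ^ 2 ∂μ := by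
      refine setIntegral_nonneg measurableSet_Ioo fun t ht => ?_
      exact mul_nonneg (Real.rpow_nonneg (hy0.trans ht.1).le _) (sq_nonneg _)
    -- combine
    set A := ∫ t, t ^ (-α) ∂μ with hAdef
    set B := ∫ t, t ^ α * (deriv g t) ^ 2 ∂μ with hBdef
    have hgyle : |g y| ≤ A ^ (1/2 : ℝ) * B ^ (1/2 : ℝ) := by
      rw [huv, hu2, hv2] at hH
      exact habs.trans hH
    have hsq : (g y) ^ 2 ≤ (A ^ (1/2 : ℝ) * B ^ (1/2 : ℝ)) ^ 2 := by
      rw [← sq_abs]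
      exact pow_le_pow_left₀ (abs_nonneg _) hgyle 2
    have hid : (A ^ (1/2 : ℝ) * B ^ (1/2 : ℝ)) ^ 2 = A * B := by
      rw [mul_pow, ← Real.rpow_natCast (A ^ (1/2:ℝ)) 2, ← Real.rpow_natCast (B ^ (1/2:ℝ)) 2,
        ← Real.rpow_mul hAnn, ← Real.rpow_mul hBnn]
      norm_num
    refine hsq.trans ?_
    rw [hid]
    calc A * B ≤ (Y ^ (1 - α) / (1 - α)) * B := by nlinarith
      _ ≤ (Y ^ (1 - α) / (1 - α)) * D := by
          have hYp : 0 ≤ Y ^ (1 - α) / (1 - α) := by positivity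
          nlinarith
  -- integrate the pointwise bound
  have hInt1 : IntegrableOn (fun y : ℝ => y ^ α * (g y) ^ 2) (Ioo 0 Y) :=
    weighted_integrableOn hα1 hY (by continuity)
  have hInt2 : IntegrableOn (fun y : ℝ => y ^ α * (Y ^ (1 - α) / (1 - α) * D)) (Ioo 0 Y) :=
    (rpow_integrableOn hα1 hY).mul_const _
  have step := setIntegral_mono_on hInt1 hInt2 measurableSet_Ioo (fun y hy => by
    have hk := key y hy
    have h2 : (0:ℝ) ≤ y ^ α := Real.rpow_nonneg hy.1.le α
    nlinarith)
  have hc : ∫ y in Ioo (0:ℝ) Y, y ^ α = Y ^ (α + 1) / (α + 1) := by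
    have hint := integral_rpow (a := 0) (b := Y) (r := α) (Or.inl hα1)
    rw [intervalIntegral.integral_of_le hY.le, integral_Ioc_eq_integral_Ioo] at hint
    rw [hint, Real.zero_rpow (by linarith : α + 1 ≠ 0)]
    ring
  have hsplit : ∫ y in Ioo (0:ℝ) Y, y ^ α * (Y ^ (1 - α) / (1 - α) * D) =
      (Y ^ (α + 1) / (α + 1)) * (Y ^ (1 - α) / (1 - α) * D) := by
    rw [integral_mul_const, hc]
  have hprod : Y ^ (α + 1) * Y ^ (1 - α) = Y ^ 2 := by
    rw [← Real.rpow_add hY]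
    rw [show α + 1 + (1 - α) = ((2:ℕ):ℝ) by push_cast; ring, Real.rpow_natCast]
  have harith : (Y ^ (α + 1) / (α + 1)) * (Y ^ (1 - α) / (1 - α) * D) =
      (1 - α ^ 2)⁻¹ * Y ^ 2 * D := by
    have h3 : 1 - α ^ 2 ≠ 0 := by nlinarith
    rw [show (1 - α ^ 2) = (α + 1) * (1 - α) by ring, mul_inv, ← hprod]
    ring
  refine step.trans ?_
  rw [hsplit, harith]


lemma inner_nonneg {α Y : ℝ} {h : ℝ → ℝ} (hh : ∀ y, 0 ≤ h y) :
    0 ≤ ∫ y in Ioo (0:ℝ) Y, y ^ α * h y :=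
  setIntegral_nonneg measurableSet_Ioo fun y hy =>
    mul_nonneg (Real.rpow_nonneg hy.1.le _) (hh y)

lemma outer_integrable {n : ℕ} {α Y : ℝ} (hα : -1 < α) (hY : 0 < Y)
    {Ω : Set (Fin n → ℝ)} (hΩo : IsOpen Ω) (hΩb : Bornology.IsBounded Ω)
    {h : (Fin n → ℝ) × ℝ → ℝ} (hh : Continuous h) :
    IntegrableOn (fun x' => ∫ y in Ioo (0:ℝ) Y, y ^ α * h (x', y)) Ω := by
  have hKc : IsCompact (closure Ω) :=
    Metric.isCompact_of_isClosed_isBounded isClosed_closure hΩb.closure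
  have hfin : IsFiniteMeasure (volume.restrict Ω) := by
    constructor
    rw [Measure.restrict_apply_univ]
    exact lt_of_le_of_lt (measure_mono subset_closure) hKc.measure_lt_top
  obtain ⟨M, hM⟩ := (hKc.prod (isCompact_Icc (a := (0:ℝ)) (b := Y))).exists_bound_of_continuousOn
    hh.continuousOn
  set M' := max M 0 with hM'
  set c := ∫ y in Ioo (0:ℝ) Y, y ^ α with hc
  have hcnn : 0 ≤ c := setIntegral_nonneg measurableSet_Ioo fun y hy =>
    Real.rpow_nonneg hy.1.le _
  have hmeas : StronglyMeasurable fun x' => ∫ y in Ioo (0:ℝ) Y, y ^ α * h (x', y) := by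
    apply MeasureTheory.StronglyMeasurable.integral_prod_right
      (f := fun x' y => y ^ α * h (x', y))
    exact (((by fun_prop : Measurable fun p : (Fin n → ℝ) × ℝ => (p.2 : ℝ) ^ α)).mul
      hh.measurable).stronglyMeasurable
  refine Integrable.mono' (integrable_const (M' * c)) hmeas.aestronglyMeasurable ?_
  filter_upwards [ae_restrict_mem hΩo.measurableSet] with x' hx'
  have hin : IntegrableOn (fun y : ℝ => y ^ α * h (x', y)) (Ioo 0 Y) :=
    weighted_integrableOn hα hY (hh.comp (continuous_const.prodMk continuous_id))
  have hb : ∀ y ∈ Ioo (0:ℝ) Y, ‖y ^ α * h (x', y)‖ ≤ M' * y ^ α := by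
    intro y hy
    have hy0 : 0 < y := hy.1
    have hmem : ((x', y) : (Fin n → ℝ) × ℝ) ∈ (closure Ω) ×ˢ Icc (0:ℝ) Y :=
      ⟨subset_closure hx', ⟨hy0.le, hy.2.le⟩⟩
    have h1 : ‖h (x', y)‖ ≤ M' := (hM _ hmem).trans (le_max_left _ _)
    have h2 : (0:ℝ) ≤ y ^ α := Real.rpow_nonneg hy0.le α
    rw [Real.norm_eq_abs, abs_mul, abs_of_nonneg h2]
    rw [Real.norm_eq_abs] at h1
    calc y ^ α * |h (x', y)| ≤ y ^ α * M' := by nlinarith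
      _ = M' * y ^ α := mul_comm _ _
  calc ‖∫ y in Ioo (0:ℝ) Y, y ^ α * h (x', y)‖
      ≤ ∫ y in Ioo (0:ℝ) Y, ‖y ^ α * h (x', y)‖ := norm_integral_le_integral_norm _
    _ ≤ ∫ y in Ioo (0:ℝ) Y, M' * y ^ α :=
        setIntegral_mono_on hin.norm ((rpow_integrableOn hα hY).const_mul M')
          measurableSet_Ioo hb
    _ = M' * c := by rw [integral_const_mul]


lemma deriv_eq_fderiv {n : ℕ} {w : (Fin n → ℝ) × ℝ → ℝ} (hw : ContDiff ℝ (⊤ : ℕ∞) w)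
    (x' : Fin n → ℝ) (y : ℝ) :
    deriv (fun t => w (x', t)) y = fderiv ℝ w (x', y) ((0 : Fin n → ℝ), (1 : ℝ)) := by
  have h1 : HasDerivAt (fun t : ℝ => ((x', t) : (Fin n → ℝ) × ℝ))
      ((0 : Fin n → ℝ), (1 : ℝ)) y :=
    (hasDerivAt_const y x').prodMk (hasDerivAt_id y)
  have h2 := (hw.differentiable (by simp) (x', y)).hasFDerivAt.comp_hasDerivAt y h1
  exact h2.deriv

lemma cont_partial {n : ℕ} {w : (Fin n → ℝ) × ℝ → ℝ} (hw : ContDiff ℝ (⊤ : ℕ∞) w) :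
    Continuous fun p : (Fin n → ℝ) × ℝ => deriv (fun t => w (p.1, t)) p.2 := by
  have h : Continuous fun p : (Fin n → ℝ) × ℝ =>
      fderiv ℝ w p ((0 : Fin n → ℝ), (1 : ℝ)) :=
    (hw.continuous_fderiv (by simp)).clm_apply continuous_const
  exact h.congr fun p => (deriv_eq_fderiv hw p.1 p.2).symm

lemma partial_sq_le {n : ℕ} {w : (Fin n → ℝ) × ℝ → ℝ} (hw : ContDiff ℝ (⊤ : ℕ∞) w)
    (x' : Fin n → ℝ) (y : ℝ) :
    (deriv (fun t => w (x', t)) y) ^ 2 ≤ ‖fderiv ℝ w (x', y)‖ ^ 2 := by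
  rw [deriv_eq_fderiv hw]
  have h1 : ‖fderiv ℝ w (x', y) ((0 : Fin n → ℝ), (1 : ℝ))‖ ≤
      ‖fderiv ℝ w (x', y)‖ * ‖((0 : Fin n → ℝ), (1 : ℝ))‖ :=
    ContinuousLinearMap.le_opNorm _ _
  have h2 : ‖((0 : Fin n → ℝ), (1 : ℝ))‖ = 1 := by
    simp [Prod.norm_def]
  rw [h2, mul_one] at h1
  calc (fderiv ℝ w (x', y) ((0 : Fin n → ℝ), (1 : ℝ))) ^ 2
      = ‖fderiv ℝ w (x', y) ((0 : Fin n → ℝ), (1 : ℝ))‖ ^ 2 := by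
        rw [Real.norm_eq_abs, sq_abs]
    _ ≤ ‖fderiv ℝ w (x', y)‖ ^ 2 := by
        have := norm_nonneg (fderiv ℝ w (x', y) ((0 : Fin n → ℝ), (1 : ℝ)))
        nlinarith


/-- Weighted Poincaré inequality on the truncated cylinder `Ω × (0,Y)` for smooth
functions vanishing at `y = Y`, and the consequent equivalence of the gradient
seminorm with the full weighted `H¹` norm, with constant depending only on `α, Y`. -/
theorem weighted_poincare_and_norm_equivalence
    (n : ℕ) (α Y : ℝ) (hα : α ∈ Set.Ioo (-1 : ℝ) 1) (hY : 0 < Y)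
    (Ω : Set (Fin n → ℝ)) (hΩo : IsOpen Ω) (hΩb : Bornology.IsBounded Ω) :
    (∀ w : (Fin n → ℝ) × ℝ → ℝ, ContDiff ℝ (⊤ : ℕ∞) w → (∀ x' ∈ Ω, w (x', Y) = 0) →
      ∫ x' in Ω, ∫ y in Set.Ioo (0 : ℝ) Y, y ^ α * (w (x', y)) ^ 2 ≤
        (1 - α ^ 2)⁻¹ * Y ^ 2 *
          ∫ x' in Ω, ∫ y in Set.Ioo (0 : ℝ) Y,
            y ^ α * (deriv (fun t => w (x', t)) y) ^ 2) ∧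
    (∃ C : ℝ, 0 < C ∧
      ∀ w : (Fin n → ℝ) × ℝ → ℝ, ContDiff ℝ (⊤ : ℕ∞) w → (∀ x' ∈ Ω, w (x', Y) = 0) →
        ∫ x' in Ω, ∫ y in Set.Ioo (0 : ℝ) Y,
            y ^ α * ((w (x', y)) ^ 2 + ‖fderiv ℝ w (x', y)‖ ^ 2) ≤
          C * ∫ x' in Ω, ∫ y in Set.Ioo (0 : ℝ) Y,
            y ^ α * ‖fderiv ℝ w (x', y)‖ ^ 2) := by
  obtain ⟨hα1, hα2⟩ := hα
  have h1α2 : (0:ℝ) < 1 - α ^ 2 := by nlinarith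
  set K := (1 - α ^ 2)⁻¹ * Y ^ 2 with hK
  have hKpos : 0 < K := by positivity
  have part1 : ∀ w : (Fin n → ℝ) × ℝ → ℝ, ContDiff ℝ (⊤ : ℕ∞) w → (∀ x' ∈ Ω, w (x', Y) = 0) →
      ∫ x' in Ω, ∫ y in Ioo (0 : ℝ) Y, y ^ α * (w (x', y)) ^ 2 ≤
        K * ∫ x' in Ω, ∫ y in Ioo (0 : ℝ) Y,
          y ^ α * (deriv (fun t => w (x', t)) y) ^ 2 := by
    intro w hw hbd
    have hd_c : Continuous fun p : (Fin n → ℝ) × ℝ =>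
        (deriv (fun t => w (p.1, t)) p.2) ^ 2 := (cont_partial hw).pow 2
    have hg_int : IntegrableOn (fun x' => K * ∫ y in Ioo (0 : ℝ) Y,
        y ^ α * (deriv (fun t => w (x', t)) y) ^ 2) Ω :=
      (outer_integrable (h := fun p => (deriv (fun t => w (p.1, t)) p.2) ^ 2)
        hα1 hY hΩo hΩb hd_c).const_mul K
    have hmono : ∫ x' in Ω, ∫ y in Ioo (0 : ℝ) Y, y ^ α * (w (x', y)) ^ 2 ≤
        ∫ x' in Ω, K * ∫ y in Ioo (0 : ℝ) Y,
          y ^ α * (deriv (fun t => w (x', t)) y) ^ 2 := by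
      refine integral_mono_of_nonneg ?_ hg_int ?_
      · exact Filter.Eventually.of_forall fun x' => inner_nonneg fun y => sq_nonneg _
      · filter_upwards [ae_restrict_mem hΩo.measurableSet] with x' hx'
        have hcomp : ContDiff ℝ (⊤ : ℕ∞) fun t : ℝ => w (x', t) :=
          hw.comp (contDiff_const.prodMk contDiff_id)
        have h1d := oneD hα1 hα2 hY hcomp (hbd x' hx')
        exact h1d
    rw [integral_const_mul] at hmono
    exact hmono
  constructor
  · exact part1
  · refine ⟨K + 1, by positivity, ?_⟩
    intro w hw hbd
    have hwc : Continuous w := hw.continuous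
    have hFc : Continuous fun p : (Fin n → ℝ) × ℝ => ‖fderiv ℝ w p‖ ^ 2 :=
      (hw.continuous_fderiv (by simp)).norm.pow 2
    have hw2c : Continuous fun p : (Fin n → ℝ) × ℝ => (w p) ^ 2 := hwc.pow 2
    have hd_c : Continuous fun p : (Fin n → ℝ) × ℝ =>
        (deriv (fun t => w (p.1, t)) p.2) ^ 2 := (cont_partial hw).pow 2
    -- inner splitting
    have innersplit : ∀ x' : Fin n → ℝ,
        ∫ y in Ioo (0 : ℝ) Y, y ^ α * ((w (x', y)) ^ 2 + ‖fderiv ℝ w (x', y)‖ ^ 2) =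
          (∫ y in Ioo (0 : ℝ) Y, y ^ α * (w (x', y)) ^ 2) +
          ∫ y in Ioo (0 : ℝ) Y, y ^ α * ‖fderiv ℝ w (x', y)‖ ^ 2 := by
      intro x'
      have hI1 : IntegrableOn (fun y : ℝ => y ^ α * (w (x', y)) ^ 2) (Ioo 0 Y) :=
        weighted_integrableOn hα1 hY (hw2c.comp (continuous_const.prodMk continuous_id))
      have hI2 : IntegrableOn (fun y : ℝ => y ^ α * ‖fderiv ℝ w (x', y)‖ ^ 2) (Ioo 0 Y) :=
        weighted_integrableOn hα1 hY (hFc.comp (continuous_const.prodMk continuous_id))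
      rw [← integral_add hI1 hI2]
      congr 1
      funext y
      ring
    have houter1 : IntegrableOn (fun x' => ∫ y in Ioo (0 : ℝ) Y,
        y ^ α * (w (x', y)) ^ 2) Ω :=
      outer_integrable (h := fun p => (w p) ^ 2) hα1 hY hΩo hΩb hw2c
    have houter2 : IntegrableOn (fun x' => ∫ y in Ioo (0 : ℝ) Y,
        y ^ α * ‖fderiv ℝ w (x', y)‖ ^ 2) Ω :=
      outer_integrable (h := fun p => ‖fderiv ℝ w p‖ ^ 2) hα1 hY hΩo hΩb hFc
    have hsplit : ∫ x' in Ω, ∫ y in Ioo (0 : ℝ) Y,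
        y ^ α * ((w (x', y)) ^ 2 + ‖fderiv ℝ w (x', y)‖ ^ 2) =
        (∫ x' in Ω, ∫ y in Ioo (0 : ℝ) Y, y ^ α * (w (x', y)) ^ 2) +
        ∫ x' in Ω, ∫ y in Ioo (0 : ℝ) Y, y ^ α * ‖fderiv ℝ w (x', y)‖ ^ 2 := by
      rw [← integral_add houter1 houter2]
      exact integral_congr_ae (Filter.Eventually.of_forall innersplit)
    -- gradient-component comparison
    have hDdG : ∫ x' in Ω, ∫ y in Ioo (0 : ℝ) Y,
        y ^ α * (deriv (fun t => w (x', t)) y) ^ 2 ≤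
        ∫ x' in Ω, ∫ y in Ioo (0 : ℝ) Y, y ^ α * ‖fderiv ℝ w (x', y)‖ ^ 2 := by
      refine integral_mono_of_nonneg ?_ houter2 ?_
      · exact Filter.Eventually.of_forall fun x' => inner_nonneg fun y => sq_nonneg _
      · refine Filter.Eventually.of_forall fun x' => ?_
        have hI1 : IntegrableOn (fun y : ℝ => y ^ α *
            (deriv (fun t => w (x', t)) y) ^ 2) (Ioo 0 Y) :=
          weighted_integrableOn hα1 hY (hd_c.comp (continuous_const.prodMk continuous_id))
        have hI2 : IntegrableOn (fun y : ℝ => y ^ α * ‖fderiv ℝ w (x', y)‖ ^ 2) (Ioo 0 Y) :=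
          weighted_integrableOn hα1 hY (hFc.comp (continuous_const.prodMk continuous_id))
        refine setIntegral_mono_on hI1 hI2 measurableSet_Ioo fun y hy => ?_
        have h2 : (0:ℝ) ≤ y ^ α := Real.rpow_nonneg hy.1.le α
        have h3 := partial_sq_le hw x' y
        nlinarith
    have hP := part1 w hw hbd
    set G := ∫ x' in Ω, ∫ y in Ioo (0 : ℝ) Y, y ^ α * ‖fderiv ℝ w (x', y)‖ ^ 2 with hG
    have hGnn : 0 ≤ G :=
      setIntegral_nonneg hΩo.measurableSet fun x' _ => inner_nonneg fun y => sq_nonneg _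
    calc ∫ x' in Ω, ∫ y in Ioo (0 : ℝ) Y,
          y ^ α * ((w (x', y)) ^ 2 + ‖fderiv ℝ w (x', y)‖ ^ 2)
        = (∫ x' in Ω, ∫ y in Ioo (0 : ℝ) Y, y ^ α * (w (x', y)) ^ 2) + G := hsplit
      _ ≤ K * G + G := by
          have := hP.trans (mul_le_mul_of_nonneg_left hDdG hKpos.le)
          linarith
      _ = (K + 1) * G := by ring
end
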